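/- arXiv:1908.07676 — 8 statements merged into one kernel-verified Lean document; each statement's English description precedes it below -/
import Mathlib

section
/- Let (X,d) be a compact metric space and f_{0,∞} = {f_n}_{n=0}^∞ a sequence of continuous self-maps of X. If the induced non-autonomous system (𝓜(X), f̂_{0,∞}) on the space of Borel probability measures is topologically transitive, then (X, f_{0,∞}) is topologically transitive. -/
open MeasureTheory Filter

/-- `nacomp f n = f_{n-1} ∘ ⋯ ∘ f_0` (with `nacomp f 0 = id`): the time-`n` map of the
non-autonomous system `(X, f_{0,∞})`. -/
def nacomp {Y : Type*} (f : ℕ → Y → Y) : ℕ → Y → Y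
  | 0 => id
  | n + 1 => f n ∘ nacomp f n

/-- The induced pushforward map `f̂` on the space `𝓜(X)` of Borel probability measures,
equipped with the Lévy–Prokhorov metric. -/
noncomputable def inducedMap {X : Type*} [MetricSpace X] [MeasurableSpace X] [BorelSpace X]
    (f : X → X) (hf : Continuous f) :
    LevyProkhorov (ProbabilityMeasure X) → LevyProkhorov (ProbabilityMeasure X) :=
  fun μ => (LevyProkhorov.toMeasureEquiv (α := ProbabilityMeasure X)).symm
    (((LevyProkhorov.toMeasureEquiv (α := ProbabilityMeasure X)) μ).map hf.measurable.aemeasurable)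

/-- Topological transitivity of the non-autonomous system given by the maps `f n`. -/
def NATransitive {Y : Type*} [TopologicalSpace Y] (f : ℕ → Y → Y) : Prop :=
  ∀ U V : Set Y, IsOpen U → IsOpen V → U.Nonempty → V.Nonempty →
    ∃ n, 1 ≤ n ∧ (nacomp f n '' U ∩ V).Nonempty

/-! The open sets of measures giving more than half their mass to `U`, resp. `V`, contain Dirac
masses, so transitivity of the induced system yields a measure `μ` with `μ U > 1/2` and
`μ (f_0^n)⁻¹ V > 1/2`; two sets each carrying more than half of a probability measure meet. -/

theorem continuous_nacomp {Y : Type*} [TopologicalSpace Y] {f : ℕ → Y → Y}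
    (hf : ∀ n, Continuous (f n)) (n : ℕ) : Continuous (nacomp f n) := by
  induction n with
  | zero => exact continuous_id
  | succ n ih => exact (hf n).comp ih

namespace MeasureTheory

theorem ProbabilityMeasure.lowerSemicontinuous_apply_of_isOpen {Ω : Type*} [MeasurableSpace Ω]
    [TopologicalSpace Ω] [OpensMeasurableSpace Ω] [HasOuterApproxClosed Ω] {U : Set Ω}
    (hU : IsOpen U) : LowerSemicontinuous fun μ : ProbabilityMeasure Ω ↦ (μ : Measure Ω) U :=
  lowerSemicontinuous_iff_le_liminf.2 fun _ ↦
    ProbabilityMeasure.le_liminf_measure_open_of_tendsto tendsto_id hU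

namespace LevyProkhorov

theorem isOpen_setOf_lt_apply {Ω : Type*} [MeasurableSpace Ω] [PseudoMetricSpace Ω]
    [OpensMeasurableSpace Ω] {U : Set Ω} (hU : IsOpen U) (c : ENNReal) :
    IsOpen {μ : LevyProkhorov (ProbabilityMeasure Ω) | c < (μ.toMeasure : Measure Ω) U} :=
  ((ProbabilityMeasure.lowerSemicontinuous_apply_of_isOpen hU).isOpen_preimage c).preimage
    continuous_toMeasure_probabilityMeasure

theorem toMeasure_nacomp_inducedMap {X : Type*} [MetricSpace X] [MeasurableSpace X]
    [BorelSpace X] {f : ℕ → X → X} (hf : ∀ n, Continuous (f n)) (n : ℕ)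
    (μ : LevyProkhorov (ProbabilityMeasure X)) :
    ((nacomp (fun n ↦ inducedMap (f n) (hf n)) n μ).toMeasure : Measure X) =
      (μ.toMeasure : Measure X).map (nacomp f n) := by
  induction n with
  | zero => simp [nacomp]
  | succ n ih =>
    change ((nacomp _ n μ).toMeasure : Measure X).map (f n) = _
    rw [ih, Measure.map_map (hf n).measurable (continuous_nacomp hf n).measurable]
    rfl

end LevyProkhorov

end MeasureTheory

theorem transitive_of_induced_transitive_general
    {X : Type*} [MetricSpace X] [MeasurableSpace X] [BorelSpace X]
    (f : ℕ → X → X) (hf : ∀ n, Continuous (f n))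
    (h : NATransitive (fun n => inducedMap (f n) (hf n))) :
    NATransitive f := by
  intro U V hU hV ⟨x, hx⟩ ⟨y, hy⟩
  have dirac_mem {z : X} {W : Set X} (hz : z ∈ W) :
      LevyProkhorov.ofMeasure ⟨Measure.dirac z, inferInstance⟩ ∈
        {μ : LevyProkhorov (ProbabilityMeasure X) | 2⁻¹ < (μ.toMeasure : Measure X) W} := by
    simp [hz]
  obtain ⟨n, hn, _, ⟨μ, hμU, rfl⟩, hμV'⟩ :=
    h _ _ (LevyProkhorov.isOpen_setOf_lt_apply hU _) (LevyProkhorov.isOpen_setOf_lt_apply hV _)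
      ⟨_, dirac_mem hx⟩ ⟨_, dirac_mem hy⟩
  have hμV : 2⁻¹ < (μ.toMeasure : Measure X) (nacomp f n ⁻¹' V) := by
    rwa [Set.mem_ofPred_eq, LevyProkhorov.toMeasure_nacomp_inducedMap,
      Measure.map_apply (continuous_nacomp hf n).measurable hV.measurableSet] at hμV'
  obtain ⟨z, hzU, hzV⟩ := nonempty_inter_of_measure_lt_add (μ.toMeasure : Measure X)
    (hV.preimage (continuous_nacomp hf n)).measurableSet (Set.subset_univ U) (Set.subset_univ _)
    (by rw [measure_univ, ← ENNReal.inv_two_add_inv_two]; exact ENNReal.add_lt_add hμU hμV)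
  exact ⟨n, hn, _, Set.mem_image_of_mem _ hzU, hzV⟩

/-- If the induced non-autonomous system on the space of Borel probability measures is
topologically transitive, then so is the base system. -/
theorem transitive_of_induced_transitive
    {X : Type*} [MetricSpace X] [CompactSpace X] [MeasurableSpace X] [BorelSpace X]
    (f : ℕ → X → X) (hf : ∀ n, Continuous (f n))
    (h : NATransitive (fun n => inducedMap (f n) (hf n))) :
    NATransitive f :=
  transitive_of_induced_transitive_general f hf h
end

section
/- Let (X,d) be a compact metric space and let f_n : X → X (n ≥ 0) and f : X → X be continuous maps. Then f_n converges uniformly to f on X if and only if the pushforward maps f̂_n converge uniformly to f̂ on (𝓜(X), 𝓟_d). -/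
/-!
If `edist (f x) (g x) ≤ δ` everywhere, then every set `B` satisfies `f₊μ B ≤ g₊μ (B^ε)` for all
`ε > δ`, so `d_LP(f̂ μ, ĝ μ) ≤ δ` uniformly in `μ`. Conversely, `x ↦ δₓ` intertwines `f` with `f̂`
and `d_LP(δₓ, δ_y) ≥ min (d x y) 1`, so uniform closeness of `f̂` and `ĝ` at Dirac measures gives
uniform closeness of `f` and `g`.
-/

open MeasureTheory Filter

open ENNReal Metric

lemma map_apply_le_map_apply_thickening {Ω X : Type*} [MeasurableSpace Ω]
    [PseudoEMetricSpace X] [MeasurableSpace X] [OpensMeasurableSpace X] (μ : Measure Ω)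
    {f g : Ω → X} (hf : Measurable f) (hg : Measurable g) {r : ℝ}
    (h : ∀ ω, edist (f ω) (g ω) < ENNReal.ofReal r) {B : Set X} (hB : MeasurableSet B) :
    μ.map f B ≤ μ.map g (thickening r B) := by
  rw [Measure.map_apply hf hB, Measure.map_apply hg isOpen_thickening.measurableSet]
  exact measure_mono fun ω hω =>
    (mem_thickening_iff_exists_edist_lt B (g ω)).2 ⟨f ω, hω, edist_comm (f ω) (g ω) ▸ h ω⟩

lemma levyProkhorovEDist_map_le_of_forall_edist_le {Ω X : Type*} [MeasurableSpace Ω]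
    [PseudoEMetricSpace X] [MeasurableSpace X] [OpensMeasurableSpace X] (μ : Measure Ω)
    {f g : Ω → X} (hf : Measurable f) (hg : Measurable g) {δ : ℝ≥0∞}
    (h : ∀ ω, edist (f ω) (g ω) ≤ δ) :
    levyProkhorovEDist (μ.map f) (μ.map g) ≤ δ := by
  refine levyProkhorovEDist_le_of_forall _ _ δ fun ε B hδε hε hB => ?_
  have hfg : ∀ ω, edist (f ω) (g ω) < ENNReal.ofReal ε.toReal := fun ω => by
    rw [ofReal_toReal hε.ne]
    exact (h ω).trans_lt hδε
  have hgf : ∀ ω, edist (g ω) (f ω) < ENNReal.ofReal ε.toReal := fun ω =>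
    edist_comm (f ω) (g ω) ▸ hfg ω
  exact ⟨le_add_right (map_apply_le_map_apply_thickening μ hf hg hfg hB),
    le_add_right (map_apply_le_map_apply_thickening μ hg hf hgf hB)⟩

lemma min_edist_one_le_levyProkhorovEDist_dirac {X : Type*} [PseudoEMetricSpace X]
    [MeasurableSpace X] [MeasurableSingletonClass X] (x y : X) :
    min (edist x y) 1 ≤ levyProkhorovEDist (Measure.dirac x) (Measure.dirac y) := by
  refine le_of_forall_gt_imp_ge_of_dense fun ε hε => ?_
  rcases le_or_gt 1 ε with hε_ge | hε_lt
  · exact (min_le_right _ _).trans hε_ge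
  have hmeas := left_measure_le_of_levyProkhorovEDist_lt hε (measurableSet_singleton x)
  -- Testing against `B = {x}`: a mass defect `1 > ε` forces `y` into the `ε`-thickening of `x`.
  have hy : y ∈ thickening ε.toReal {x} := by
    by_contra hy
    exact hε_lt.not_ge (by simpa [Measure.dirac_apply, hy] using hmeas)
  obtain ⟨z, rfl, hyz⟩ := (mem_thickening_iff_exists_edist_lt _ _).1 hy
  rw [ofReal_toReal (hε_lt.trans one_lt_top).ne, edist_comm] at hyz
  exact (min_le_left _ _).trans hyz.le

section inducedMap

variable {X : Type*} [MetricSpace X] [MeasurableSpace X] [BorelSpace X]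

lemma edist_inducedMap_le_of_forall_edist_le {f g : X → X} (hf : Continuous f)
    (hg : Continuous g) {δ : ℝ≥0∞} (h : ∀ x, edist (f x) (g x) ≤ δ)
    (μ : LevyProkhorov (ProbabilityMeasure X)) :
    edist (inducedMap f hf μ) (inducedMap g hg μ) ≤ δ :=
  levyProkhorovEDist_map_le_of_forall_edist_le _ hf.measurable hg.measurable h

lemma inducedMap_ofMeasure_diracProba {f : X → X} (hf : Continuous f) (x : X) :
    inducedMap f hf (.ofMeasure (diracProba x)) = .ofMeasure (diracProba (f x)) :=
  congrArg _ (Subtype.ext (Measure.map_dirac' hf.measurable x))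

lemma min_edist_one_le_edist_ofMeasure_diracProba (x y : X) :
    min (edist x y) 1 ≤
      edist (LevyProkhorov.ofMeasure (diracProba x)) (LevyProkhorov.ofMeasure (diracProba y)) :=
  min_edist_one_le_levyProkhorovEDist_dirac x y

end inducedMap

theorem tendstoUniformly_iff_induced_tendstoUniformly_general
    {X : Type*} [MetricSpace X] [MeasurableSpace X] [BorelSpace X]
    (f : ℕ → X → X) (hf : ∀ n, Continuous (f n)) (g : X → X) (hg : Continuous g) :
    TendstoUniformly (fun n => f n) g atTop ↔
      TendstoUniformly (fun n => inducedMap (f n) (hf n)) (inducedMap g hg) atTop := by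
  rw [EMetric.tendstoUniformly_iff, EMetric.tendstoUniformly_iff]
  constructor
  · intro H ε hε
    obtain ⟨δ, hδ, hδε⟩ := exists_between hε
    filter_upwards [H δ hδ] with n hn μ
    exact (edist_inducedMap_le_of_forall_edist_le hg (hf n) (fun x => (hn x).le) μ).trans_lt hδε
  · intro H ε hε
    filter_upwards [H (min ε 1) (lt_min hε one_pos)] with n hn x
    have hdirac := hn (.ofMeasure (diracProba x))
    rw [inducedMap_ofMeasure_diracProba, inducedMap_ofMeasure_diracProba] at hdirac
    have hmin := (min_edist_one_le_edist_ofMeasure_diracProba _ _).trans_lt hdirac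
    exact lt_of_not_ge fun hεle => (min_le_min_right 1 hεle).not_gt hmin

/-- `f_n → f` uniformly on `X` iff the pushforward maps `f̂_n → f̂` uniformly on `(𝓜(X), 𝓟_d)`. -/
theorem tendstoUniformly_iff_induced_tendstoUniformly
    {X : Type*} [MetricSpace X] [CompactSpace X] [MeasurableSpace X] [BorelSpace X]
    (f : ℕ → X → X) (hf : ∀ n, Continuous (f n)) (g : X → X) (hg : Continuous g) :
    TendstoUniformly (fun n => f n) g atTop ↔
      TendstoUniformly (fun n => inducedMap (f n) (hf n)) (inducedMap g hg) atTop :=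
  tendstoUniformly_iff_induced_tendstoUniformly_general f hf g hg
end

section
/- Let (X,d) be a compact metric space and f_{0,∞} = {f_n}_{n=0}^∞ a sequence of continuous self-maps of X. If (X, f_{0,∞}) is weakly mixing of all orders, then the induced system (𝓜(X), f̂_{0,∞}) is weakly mixing of all orders. -/
/-!
A probability measure is moved by at most `δ` in the Lévy–Prokhorov
metric when it is pushed forward along a measurable map moving every point by less than `δ`.
In particular, a measurable quantization `c : X → Fin m`, `a : Fin m → X` with
`dist (a (c x)) x < δ` approximates every measure by a finitely supported one.

Given targets `μ i ∈ U i` and `ν i ∈ V i`, quantize both and apply weak mixing of order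
`∑ i, m_i²` to the pairs of atoms `(a s, a t)`: this gives one time `k` and points `z` close to
`a s` with `f^k z` close to `a t`. Pushing the independent coupling `μ i ⊗ ν i` forward along
`(x, y) ↦ z (c x, c y)` gives a measure close to `μ i` whose image under `f^k` is close to `ν i`.
-/

open MeasureTheory Filter

/-- Weak mixing of order `n` of the non-autonomous system given by the maps `f k`. -/
def NAWeakMixingOrder {Y : Type*} [TopologicalSpace Y] (f : ℕ → Y → Y) (n : ℕ) : Prop :=
  ∀ U V : Fin n → Set Y, (∀ i, IsOpen (U i)) → (∀ i, IsOpen (V i)) →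
    (∀ i, (U i).Nonempty) → (∀ i, (V i).Nonempty) →
    ∃ k, 1 ≤ k ∧ ∀ i, (nacomp f k '' U i ∩ V i).Nonempty

open Metric Set

theorem measurable_nacomp {Y : Type*} [MeasurableSpace Y] {f : ℕ → Y → Y}
    (hf : ∀ n, Measurable (f n)) : ∀ k, Measurable (nacomp f k)
  | 0 => measurable_id
  | k + 1 => (hf k).comp (measurable_nacomp hf k)

theorem NAWeakMixingOrder.exists_nacomp_dist_lt {Y : Type*} [PseudoMetricSpace Y]
    {f : ℕ → Y → Y} {S : Type*} [Fintype S] (h : NAWeakMixingOrder f (Fintype.card S))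
    (x y : S → Y) {r : S → ℝ} (hr : ∀ s, 0 < r s) :
    ∃ k, 1 ≤ k ∧ ∃ z : S → Y,
      ∀ s, dist (z s) (x s) < r s ∧ dist (nacomp f k (z s)) (y s) < r s := by
  let e := (Fintype.equivFin S).symm
  obtain ⟨k, hk, hmix⟩ := h (fun j => ball (x (e j)) (r (e j))) (fun j => ball (y (e j)) (r (e j)))
    (fun _ => isOpen_ball) (fun _ => isOpen_ball)
    (fun j => nonempty_ball.2 (hr _)) (fun j => nonempty_ball.2 (hr _))
  have hpoint (s : S) : ∃ z, dist z (x s) < r s ∧ dist (nacomp f k z) (y s) < r s := by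
    obtain ⟨_, ⟨z, hz, rfl⟩, hzy⟩ := hmix (e.symm s)
    rw [Equiv.apply_symm_apply] at hz hzy
    exact ⟨z, hz, hzy⟩
  choose z hz using hpoint
  exact ⟨k, hk, z, hz⟩

theorem exists_measurable_fin_dist_lt {X : Type*} [PseudoMetricSpace X] [CompactSpace X]
    [Nonempty X] [MeasurableSpace X] [OpensMeasurableSpace X] {δ : ℝ} (hδ : 0 < δ) :
    ∃ (m : ℕ) (c : X → Fin m) (a : Fin m → X), Measurable c ∧ ∀ x, dist (a (c x)) x < δ := by
  let e := TopologicalSpace.denseSeq X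
  have hcover : univ ⊆ ⋃ k, ball (e k) δ := fun x _ => by
    obtain ⟨k, hk⟩ := denseRange_iff.1 (TopologicalSpace.denseRange_denseSeq X) x δ hδ
    exact mem_iUnion.2 ⟨k, mem_ball.2 hk⟩
  obtain ⟨t, ht⟩ := isCompact_univ.elim_finite_subcover _ (fun _ => isOpen_ball) hcover
  let N := t.sup id
  let q := SimpleFunc.nearestPtInd e N
  refine ⟨N + 1, fun x => Fin.ofNat (N + 1) (q x), fun j => e j,
    (measurable_from_nat (f := Fin.ofNat (N + 1))).comp q.measurable, fun x => ?_⟩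
  obtain ⟨k, hk, hxk⟩ := mem_iUnion₂.1 (ht (mem_univ x))
  have hq : (Fin.ofNat (N + 1) (q x) : ℕ) = q x :=
    Nat.mod_eq_of_lt (Nat.lt_succ_of_le (SimpleFunc.nearestPtInd_le e N x))
  have hnear : edist (e (q x)) x ≤ edist (e k) x :=
    SimpleFunc.edist_nearestPt_le e x (Finset.le_sup (f := id) hk)
  rw [edist_dist, edist_dist, ENNReal.ofReal_le_ofReal_iff dist_nonneg] at hnear
  show dist (e (Fin.ofNat (N + 1) (q x) : ℕ)) x < δ
  rw [hq]
  exact hnear.trans_lt (mem_ball'.1 hxk)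

theorem levyProkhorovDist_map_le_of_dist_le {Ω X : Type*} [MeasurableSpace Ω]
    [PseudoMetricSpace X] [MeasurableSpace X] [OpensMeasurableSpace X]
    (ρ : Measure Ω) [IsProbabilityMeasure ρ] {x y : Ω → X} (hx : Measurable x) (hy : Measurable y)
    {δ : ℝ} (hδ : 0 ≤ δ) (hxy : ∀ ω, dist (x ω) (y ω) ≤ δ) :
    levyProkhorovDist (ρ.map x) (ρ.map y) ≤ δ := by
  have := Measure.isProbabilityMeasure_map (μ := ρ) hx.aemeasurable
  have := Measure.isProbabilityMeasure_map (μ := ρ) hy.aemeasurable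
  refine levyProkhorovDist_le_of_forall_le _ _ hδ fun ε B hε hB => ?_
  rw [Measure.map_apply hx hB, Measure.map_apply hy isOpen_thickening.measurableSet]
  refine le_add_right (measure_mono fun ω hω => ?_)
  exact mem_thickening_iff.2 ⟨x ω, hω, (dist_comm (x ω) (y ω) ▸ hxy ω).trans_lt hε⟩

theorem exists_levyProkhorovDist_le_of_weakMixing {X : Type*} [PseudoMetricSpace X]
    [CompactSpace X] [MeasurableSpace X] [OpensMeasurableSpace X] {f : ℕ → X → X}
    (hf : ∀ n, Measurable (f n)) (h : ∀ n, 2 ≤ n → NAWeakMixingOrder f n)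
    {ι : Type*} [Fintype ι] (hι : 2 ≤ Fintype.card ι) (μ ν : ι → Measure X)
    [∀ i, IsProbabilityMeasure (μ i)] [∀ i, IsProbabilityMeasure (ν i)]
    {δ : ι → ℝ} (hδ : ∀ i, 0 < δ i) :
    ∃ k, 1 ≤ k ∧ ∀ i, ∃ P : Measure X, IsProbabilityMeasure P ∧
      levyProkhorovDist P (μ i) ≤ δ i ∧ levyProkhorovDist (P.map (nacomp f k)) (ν i) ≤ δ i := by
  obtain ⟨i₀⟩ : Nonempty ι := Fintype.card_pos_iff.1 (by omega)
  have : Nonempty X := nonempty_of_isProbabilityMeasure (μ i₀)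
  choose m c a hc hca using fun i => exists_measurable_fin_dist_lt (X := X) (half_pos (hδ i))
  have (i : ι) : Nonempty (Fin (m i)) := ⟨c i (Classical.arbitrary X)⟩
  have hS : 2 ≤ Fintype.card (Σ i, Fin (m i) × Fin (m i)) :=
    hι.trans (Fintype.card_le_of_surjective Sigma.fst fun i => ⟨⟨i, Classical.arbitrary _⟩, rfl⟩)
  obtain ⟨k, hk, z, hz⟩ := (h _ hS).exists_nacomp_dist_lt (fun s => a s.1 s.2.1)
    (fun s => a s.1 s.2.2) fun s => half_pos (hδ s.1)
  refine ⟨k, hk, fun i => ?_⟩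
  let Z : X × X → X := fun p => z ⟨i, c i p.1, c i p.2⟩
  have hZ : Measurable Z :=
    (Measurable.of_discrete (f := fun q : Fin (m i) × Fin (m i) => z ⟨i, q⟩)).comp
      ((hc i).prodMap (hc i))
  have hfk := measurable_nacomp hf k
  have hZμ (p : X × X) : dist (Z p) p.1 ≤ δ i :=
    (dist_triangle _ (a i (c i p.1)) _).trans
      (by linarith [(hz ⟨i, c i p.1, c i p.2⟩).1, hca i p.1])
  have hZν (p : X × X) : dist (nacomp f k (Z p)) p.2 ≤ δ i :=
    (dist_triangle _ (a i (c i p.2)) _).trans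
      (by linarith [(hz ⟨i, c i p.1, c i p.2⟩).2, hca i p.2])
  refine ⟨((μ i).prod (ν i)).map Z, Measure.isProbabilityMeasure_map hZ.aemeasurable, ?_, ?_⟩
  · calc levyProkhorovDist (((μ i).prod (ν i)).map Z) (μ i)
        = levyProkhorovDist (((μ i).prod (ν i)).map Z) (((μ i).prod (ν i)).map Prod.fst) := by
          rw [Measure.map_fst_prod, measure_univ, one_smul]
      _ ≤ δ i := levyProkhorovDist_map_le_of_dist_le _ hZ measurable_fst (hδ i).le hZμ
  · calc levyProkhorovDist ((((μ i).prod (ν i)).map Z).map (nacomp f k)) (ν i)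
        = levyProkhorovDist (((μ i).prod (ν i)).map (nacomp f k ∘ Z))
            (((μ i).prod (ν i)).map Prod.snd) := by
          rw [Measure.map_map hfk hZ, Measure.map_snd_prod, measure_univ, one_smul]
      _ ≤ δ i := levyProkhorovDist_map_le_of_dist_le _ (hfk.comp hZ) measurable_snd (hδ i).le hZν

theorem toMeasure_nacomp_inducedMap {X : Type*} [MetricSpace X] [MeasurableSpace X]
    [BorelSpace X] {f : ℕ → X → X} (hf : ∀ n, Continuous (f n)) (k : ℕ)
    (μ : LevyProkhorov (ProbabilityMeasure X)) :
    ((nacomp (fun n => inducedMap (f n) (hf n)) k μ).toMeasure : Measure X)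
      = (μ.toMeasure : Measure X).map (nacomp f k) := by
  induction k with
  | zero => exact Measure.map_id.symm
  | succ k ih =>
    change _ = Measure.map (f k ∘ nacomp f k) _
    rw [nacomp, Function.comp_apply, ← Measure.map_map (hf k).measurable
      (measurable_nacomp (fun n => (hf n).measurable) k), ← ih]
    exact ProbabilityMeasure.toMeasure_map _ (hf k).measurable.aemeasurable

/-- If `(X, f_{0,∞})` is weakly mixing of all orders, then so is the induced system
`(𝓜(X), f̂_{0,∞})`. -/
theorem induced_weakMixingAllOrders_of_weakMixingAllOrders
    {X : Type*} [MetricSpace X] [CompactSpace X] [MeasurableSpace X] [BorelSpace X]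
    (f : ℕ → X → X) (hf : ∀ n, Continuous (f n))
    (h : ∀ n, 2 ≤ n → NAWeakMixingOrder f n) :
    ∀ n, 2 ≤ n → NAWeakMixingOrder (fun k => inducedMap (f k) (hf k)) n := by
  intro n hn U V hUo hVo hU hV
  choose μ hμ using hU
  choose ν hν using hV
  choose ε hε hεU using fun i => Metric.isOpen_iff.1 (hUo i) _ (hμ i)
  choose ε' hε' hεV using fun i => Metric.isOpen_iff.1 (hVo i) _ (hν i)
  obtain ⟨k, hk, hP⟩ := exists_levyProkhorovDist_le_of_weakMixing (fun n => (hf n).measurable) h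
    (by simpa using hn) (fun i => (μ i).toMeasure) (fun i => (ν i).toMeasure)
    (δ := fun i => min (ε i) (ε' i) / 2) fun i => half_pos (lt_min (hε i) (hε' i))
  refine ⟨k, hk, fun i => ?_⟩
  obtain ⟨P, hP, hPμ, hPν⟩ := hP i
  let Q : LevyProkhorov (ProbabilityMeasure X) := .ofMeasure ⟨P, hP⟩
  have hQU : Q ∈ U i :=
    hεU i (mem_ball.2 (hPμ.trans_lt (by linarith [hε i, min_le_left (ε i) (ε' i)])))
  have hQV : nacomp (fun k => inducedMap (f k) (hf k)) k Q ∈ V i := by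
    refine hεV i (mem_ball.2 ?_)
    rw [LevyProkhorov.dist_probabilityMeasure_def, toMeasure_nacomp_inducedMap]
    exact hPν.trans_lt (by linarith [hε' i, min_le_right (ε i) (ε' i)])
  exact ⟨_, mem_image_of_mem _ hQU, hQV⟩
end

section
/- Let (X,d) be a compact metric space and f_{0,∞} = {f_n}_{n=0}^∞ a sequence of continuous self-maps of X. Then: (i) if (X, f_{0,∞}) is chain mixing, then it is chain weakly mixing of all orders; (ii) if (X, f_{0,∞}) is weakly mixing of all orders, then it is chain exact; (iii) if (X, f_{0,∞}) is chain exact, then it is chain transitive. -/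
open MeasureTheory Filter

/-- An `δ`-chain of the non-autonomous system from `x` to `y` with length `k`. -/
def NAChain {Y : Type*} [PseudoMetricSpace Y] (f : ℕ → Y → Y) (δ : ℝ) (x y : Y) (k : ℕ) : Prop :=
  ∃ c : ℕ → Y, c 0 = x ∧ c k = y ∧ ∀ i, i < k → dist (f i (c i)) (c (i + 1)) < δ

/-- Chain transitivity of the non-autonomous system given by the maps `f n`. -/
def NAChainTransitive {Y : Type*} [PseudoMetricSpace Y] (f : ℕ → Y → Y) : Prop :=
  ∀ x y : Y, ∀ ε : ℝ, 0 < ε → ∃ k, 1 ≤ k ∧ NAChain f ε x y k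

/-- Chain mixing of the non-autonomous system given by the maps `f n`. -/
def NAChainMixing {Y : Type*} [PseudoMetricSpace Y] (f : ℕ → Y → Y) : Prop :=
  ∀ x y : Y, ∀ ε : ℝ, 0 < ε → ∃ N, 1 ≤ N ∧ ∀ k, N ≤ k → NAChain f ε x y k

/-- Chain exactness of the non-autonomous system given by the maps `f n`. -/
def NAChainExact {Y : Type*} [PseudoMetricSpace Y] (f : ℕ → Y → Y) : Prop :=
  ∀ ε : ℝ, 0 < ε → ∀ U : Set Y, IsOpen U → U.Nonempty →
    ∃ N, 1 ≤ N ∧ ∀ x : Y, ∃ y ∈ U, NAChain f ε y x N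

/-- Chain weak mixing of all orders: every finite product system (with the sup metric)
is chain transitive. -/
def NAChainWeakMixingAllOrders {Y : Type*} [PseudoMetricSpace Y] (f : ℕ → Y → Y) : Prop :=
  ∀ n, 1 ≤ n → NAChainTransitive (fun k (x : Fin n → Y) i => f k (x i))

/-- For a non-autonomous system on a compact metric space:
(i) chain mixing implies chain weak mixing of all orders;
(ii) weak mixing of all orders implies chain exactness;
(iii) chain exactness implies chain transitivity. -/
theorem chain_implications
    {X : Type*} [MetricSpace X] [CompactSpace X]
    (f : ℕ → X → X) (hf : ∀ n, Continuous (f n)) :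
    (NAChainMixing f → NAChainWeakMixingAllOrders f) ∧
    ((∀ n, 2 ≤ n → NAWeakMixingOrder f n) → NAChainExact f) ∧
    (NAChainExact f → NAChainTransitive f) := by

  refine ⟨?_, ?_, ?_⟩
  · -- (i) chain mixing → chain weak mixing of all orders
    intro hcm n hn x y ε hε
    -- for each coordinate, get a threshold
    choose N hN1 hN using fun i : Fin n => hcm (x i) (y i) ε hε
    have hne : Nonempty (Fin n) := ⟨⟨0, hn⟩⟩
    set K := Finset.univ.sup N with hK
    have hKi : ∀ i, N i ≤ K := fun i => Finset.le_sup (Finset.mem_univ i)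
    have hK1 : 1 ≤ K := le_trans (hN1 ⟨0, hn⟩) (hKi ⟨0, hn⟩)
    choose c hc0 hcK hcs using fun i : Fin n => hN i K (hKi i)
    refine ⟨K, hK1, fun m j => c j m, ?_, ?_, ?_⟩
    · funext i; exact hc0 i
    · funext i; exact hcK i
    · intro i hi
      rw [dist_pi_lt_iff hε]
      intro j
      exact hcs j i hi
  · -- (ii) weak mixing of all orders → chain exact
    intro hwm ε hε U hUopen hUne
    obtain ⟨u0, hu0⟩ := hUne
    have hε2 : 0 < ε / 2 := by linarith
    -- finite subcover by ε/2 balls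
    obtain ⟨t, ht⟩ := isCompact_univ.elim_finite_subcover
      (fun z : X => Metric.ball z (ε / 2)) (fun z => Metric.isOpen_ball)
      (fun x _ => Set.mem_iUnion.2 ⟨x, Metric.mem_ball_self hε2⟩)
    set l := t.toList with hl
    set n := l.length + 2 with hn
    obtain ⟨k, hk1, hk⟩ := hwm n (by omega)
      (fun _ => U) (fun i => Metric.ball (l.getD i u0) (ε / 2))
      (fun _ => hUopen) (fun _ => Metric.isOpen_ball)
      (fun _ => ⟨u0, hu0⟩) (fun _ => ⟨l.getD _ u0, Metric.mem_ball_self hε2⟩)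
    refine ⟨k, hk1, fun x => ?_⟩
    -- x lies in some ball of the cover
    obtain ⟨z, hzt, hxz⟩ : ∃ z ∈ t, x ∈ Metric.ball z (ε / 2) := by
      have := ht (Set.mem_univ x)
      simpa using this
    obtain ⟨j, hjl, hjz⟩ : ∃ j : ℕ, j < l.length ∧ l.getD j u0 = z := by
      have hz : z ∈ l := Finset.mem_toList.2 hzt
      obtain ⟨j, hj, hje⟩ := List.mem_iff_getElem.1 hz
      exact ⟨j, hj, by rw [List.getD_eq_getElem l u0 hj]; exact hje⟩
    obtain ⟨w, hw1, hw2⟩ := hk ⟨j, by omega⟩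
    obtain ⟨y, hyU, hyw⟩ := hw1
    refine ⟨y, hyU, fun m => if m < k then nacomp f m y else x, ?_, ?_, ?_⟩
    · simp only [if_pos (by omega : 0 < k)]; rfl
    · simp
    · intro i hi
      by_cases hik : i + 1 < k
      · simp only [if_pos (by omega : i < k), if_pos hik]
        have : nacomp f (i + 1) y = f i (nacomp f i y) := rfl
        rw [this, dist_self]; exact hε
      · have hik' : i + 1 = k := by omega
        simp only [if_pos (by omega : i < k), if_neg (by omega : ¬ i + 1 < k)]
        have h1 : f i (nacomp f i y) = nacomp f k y := by rw [← hik']; rfl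
        have hwx : dist w x < ε := by
          have h2 : dist x z < ε / 2 := Metric.mem_ball.1 hxz
          have h3 : dist w z < ε / 2 := by
            rw [← hjz]
            exact Metric.mem_ball.1 hw2
          calc dist w x ≤ dist w z + dist z x := dist_triangle _ _ _
            _ < ε / 2 + ε / 2 := by rw [dist_comm z x]; linarith
            _ = ε := by ring
        rw [h1, hyw]; exact hwx
  · -- (iii) chain exact → chain transitive
    intro hce x y ε hε
    have hε2 : 0 < ε / 2 := by linarith
    obtain ⟨δ, hδ, hδε⟩ := Metric.uniformContinuous_iff.1
      (CompactSpace.uniformContinuous_of_continuous (hf 0)) (ε / 2) hε2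
    obtain ⟨N, hN1, hN⟩ := hce (ε / 2) hε2 (Metric.ball x δ) Metric.isOpen_ball
      ⟨x, Metric.mem_ball_self hδ⟩
    obtain ⟨y', hy', c, hc0, hcN, hcs⟩ := hN y
    refine ⟨N, hN1, fun m => if m = 0 then x else c m, ?_, ?_, ?_⟩
    · simp
    · show (if N = 0 then x else c N) = y
      rw [if_neg (by omega)]; exact hcN
    · intro i hi
      rcases Nat.eq_zero_or_pos i with hi0 | hi0
      · subst hi0
        simp only [if_pos rfl, if_neg (by omega : ¬ (0:ℕ) + 1 = 0)]
        have h1 : dist (f 0 x) (f 0 y') < ε / 2 := by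
          apply hδε
          rw [dist_comm]
          exact Metric.mem_ball.1 hy'
        have h2 : dist (f 0 y') (c 1) < ε / 2 := by
          have := hcs 0 hi
          rwa [hc0] at this
        calc dist (f 0 x) (c (0 + 1)) ≤ dist (f 0 x) (f 0 y') + dist (f 0 y') (c (0+1)) :=
              dist_triangle _ _ _
          _ < ε / 2 + ε / 2 := by exact add_lt_add h1 h2
          _ = ε := by ring
      · simp only [if_neg (by omega : ¬ i = 0), if_neg (by omega : ¬ i + 1 = 0)]
        exact lt_trans (hcs i hi) (by linarith)
end

section
/- Let (X,d) be a compact metric space and f : X → X a continuous map. Then f is surjective if and only if the induced pushforward map f̂ : 𝓜(X) → 𝓜(X) is surjective. -/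
open MeasureTheory Filter

/-! If `f̂` is onto, a preimage of `δ_y` gives full mass to `f⁻¹{y}`, so the fibre is nonempty.
Conversely, a Borel section `g` of `f` gives `f̂ (ĝ ν) = ν`. The section is built in the manner of
Kuratowski–Ryll-Nardzewski: fix a dense sequence `D`, and shrink the compact fibre `f⁻¹{y}` by
intersecting at stage `n` with the first ball `closedBall (D i) (1/2)^n` that meets it. The chosen
centres converge to the unique point of the nested intersection, and each choice depends
measurably on `y` because the sets `{y | K y ∩ C ≠ ∅}`, `C` closed, stay measurable along the
construction. -/

open Metric Set Topology

section FirstHit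

variable {X : Type*} [MetricSpace X]

noncomputable def firstHit (D : ℕ → X) (r : ℝ) (K : Set X) : ℕ :=
  sInf {i | (K ∩ closedBall (D i) r).Nonempty}

noncomputable def refineCell (D : ℕ → X) (r : ℝ) (K : Set X) : Set X :=
  K ∩ closedBall (D (firstHit D r K)) r

variable {D : ℕ → X} {r : ℝ} {K : Set X}

lemma exists_inter_closedBall_nonempty (hD : DenseRange D) (hr : 0 < r) (hK : K.Nonempty) :
    ∃ i, (K ∩ closedBall (D i) r).Nonempty := by
  obtain ⟨x, hx⟩ := hK
  obtain ⟨i, hi⟩ := hD.exists_dist_lt x hr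
  exact ⟨i, x, hx, mem_closedBall.2 hi.le⟩

lemma refineCell_nonempty (hD : DenseRange D) (hr : 0 < r) (hK : K.Nonempty) :
    (refineCell D r K).Nonempty :=
  Nat.sInf_mem (exists_inter_closedBall_nonempty hD hr hK)

lemma firstHit_eq_iff (hD : DenseRange D) (hr : 0 < r) (hK : K.Nonempty) {i : ℕ} :
    firstHit D r K = i ↔
      (K ∩ closedBall (D i) r).Nonempty ∧ ∀ j < i, ¬(K ∩ closedBall (D j) r).Nonempty := by
  constructor
  · rintro rfl
    exact ⟨refineCell_nonempty hD hr hK, fun j hj => Nat.notMem_of_lt_sInf hj⟩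
  · rintro ⟨hi, hlt⟩
    exact le_antisymm (Nat.sInf_le hi) (not_lt.1 fun h => hlt _ h (refineCell_nonempty hD hr hK))

end FirstHit

section ClosedHitMeasurable

variable {X Y : Type*} [MetricSpace X] [MeasurableSpace Y]

def ClosedHitMeasurable (K : Y → Set X) : Prop :=
  ∀ C : Set X, IsClosed C → MeasurableSet {y | (K y ∩ C).Nonempty}

variable {K : Y → Set X} {D : ℕ → X} {r : ℝ}

lemma ClosedHitMeasurable.measurable_firstHit (hK : ClosedHitMeasurable K) (hD : DenseRange D)
    (hr : 0 < r) (hne : ∀ y, (K y).Nonempty) : Measurable fun y => firstHit D r (K y) := by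
  refine measurable_to_countable' fun i => ?_
  have : (fun y => firstHit D r (K y)) ⁻¹' {i} = {y | (K y ∩ closedBall (D i) r).Nonempty} ∩
      ⋂ j < i, {y | (K y ∩ closedBall (D j) r).Nonempty}ᶜ := by
    ext y
    simp [firstHit_eq_iff hD hr (hne y)]
  rw [this]
  exact (hK _ isClosed_closedBall).inter
    (.biInter (to_countable _) fun j _ => (hK _ isClosed_closedBall).compl)

lemma ClosedHitMeasurable.refine (hK : ClosedHitMeasurable K) (hD : DenseRange D)
    (hr : 0 < r) (hne : ∀ y, (K y).Nonempty) :
    ClosedHitMeasurable fun y => refineCell D r (K y) := by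
  intro C hC
  have : {y | (refineCell D r (K y) ∩ C).Nonempty} = ⋃ i, (fun y => firstHit D r (K y)) ⁻¹' {i} ∩
      {y | (K y ∩ (closedBall (D i) r ∩ C)).Nonempty} := by
    ext y
    simp [refineCell, inter_assoc]
  rw [this]
  exact .iUnion fun i => (hK.measurable_firstHit hD hr hne (measurableSet_singleton i)).inter
    (hK _ (isClosed_closedBall.inter hC))

end ClosedHitMeasurable

section FiberCell

variable {X Y : Type*} [MetricSpace X]

noncomputable def fiberCell (f : X → Y) (D : ℕ → X) : ℕ → Y → Set X
  | 0, y => f ⁻¹' {y}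
  | n + 1, y => refineCell D ((1 / 2) ^ n) (fiberCell f D n y)

variable {f : X → Y} {D : ℕ → X}

lemma fiberCell_nonempty (hs : Function.Surjective f) (hD : DenseRange D) (n : ℕ) (y : Y) :
    (fiberCell f D n y).Nonempty := by
  induction n with
  | zero => exact hs y
  | succ n ih => exact refineCell_nonempty hD (by positivity) ih

lemma isClosed_fiberCell [TopologicalSpace Y] [T1Space Y] (hf : Continuous f) (n : ℕ) (y : Y) :
    IsClosed (fiberCell f D n y) := by
  induction n with
  | zero => exact isClosed_singleton.preimage hf
  | succ n ih => exact ih.inter isClosed_closedBall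

lemma antitone_fiberCell (y : Y) : Antitone fun n => fiberCell f D n y :=
  antitone_nat_of_succ_le fun _ => inter_subset_left

lemma dist_le_of_mem_fiberCell_succ {n : ℕ} {y : Y} {x : X} (hx : x ∈ fiberCell f D (n + 1) y) :
    dist x (D (firstHit D ((1 / 2) ^ n) (fiberCell f D n y))) ≤ (1 / 2) ^ n :=
  mem_closedBall.1 hx.2

lemma closedHitMeasurable_fiberCell [CompactSpace X] [TopologicalSpace Y] [T2Space Y]
    [MeasurableSpace Y] [OpensMeasurableSpace Y] (hf : Continuous f) (hs : Function.Surjective f)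
    (hD : DenseRange D) (n : ℕ) : ClosedHitMeasurable (fiberCell f D n) := by
  induction n with
  | zero =>
    intro C hC
    have : {y | (f ⁻¹' {y} ∩ C).Nonempty} = f '' C := by
      ext y
      simp [Set.Nonempty, and_comm]
    simpa [fiberCell, this] using (hC.isCompact.image hf).isClosed.measurableSet
  | succ n ih => exact ih.refine hD (by positivity) (fiberCell_nonempty hs hD n)

end FiberCell

theorem Continuous.exists_measurable_rightInverse_of_surjective {X Y : Type*} [MetricSpace X]
    [CompactSpace X] [MeasurableSpace X] [BorelSpace X] [TopologicalSpace Y] [T2Space Y]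
    [MeasurableSpace Y] [OpensMeasurableSpace Y] {f : X → Y} (hf : Continuous f)
    (hs : Function.Surjective f) : ∃ g : Y → X, Measurable g ∧ Function.RightInverse g f := by
  rcases isEmpty_or_nonempty Y with _ | ⟨⟨y⟩⟩
  · exact ⟨isEmptyElim, measurable_of_empty _, isEmptyElim⟩
  have : Nonempty X := ⟨(hs y).choose⟩
  obtain ⟨D, hD⟩ := TopologicalSpace.exists_dense_seq X
  have hinter (y : Y) : (⋂ n, fiberCell f D n y).Nonempty :=
    IsCompact.nonempty_iInter_of_sequence_nonempty_isCompact_isClosed _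
      (fun n => antitone_fiberCell y n.le_succ) (fiberCell_nonempty hs hD · y)
      (isClosed_fiberCell hf 0 y).isCompact (isClosed_fiberCell hf · y)
  choose g hg using hinter
  refine ⟨g, ?_, fun y => mem_iInter.1 (hg y) 0⟩
  let c (n : ℕ) (y : Y) : X := D (firstHit D ((1 / 2) ^ n) (fiberCell f D n y))
  have hc (n : ℕ) : Measurable (c n) := measurable_from_top.comp <|
    (closedHitMeasurable_fiberCell hf hs hD n).measurable_firstHit hD (by positivity)
      (fiberCell_nonempty hs hD n)
  have hlim (y : Y) : Tendsto (c · y) atTop (𝓝 (g y)) := by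
    refine tendsto_iff_dist_tendsto_zero.2 <| squeeze_zero (fun _ => dist_nonneg) (fun n => ?_)
      (tendsto_pow_atTop_nhds_zero_of_lt_one (r := 1 / 2) (by norm_num) (by norm_num))
    rw [dist_comm]
    exact dist_le_of_mem_fiberCell_succ (mem_iInter.1 (hg y) (n + 1))
  exact measurable_of_tendsto_metrizable hc (tendsto_pi_nhds.2 hlim)

namespace MeasureTheory.ProbabilityMeasure

variable {α β : Type*} [MeasurableSpace α] [MeasurableSpace β] {f : α → β}

lemma surjective_map_of_rightInverse (hf : Measurable f) {g : β → α} (hg : Measurable g)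
    (hfg : Function.RightInverse g f) :
    Function.Surjective fun μ : ProbabilityMeasure α => μ.map hf.aemeasurable := by
  intro ν
  refine ⟨ν.map hg.aemeasurable, toMeasure_injective ?_⟩
  rw [toMeasure_map, toMeasure_map, Measure.map_map hf hg, hfg.comp_eq_id, Measure.map_id]

lemma surjective_of_surjective_map [MeasurableSingletonClass β] (hf : Measurable f)
    (h : Function.Surjective fun μ : ProbabilityMeasure α => μ.map hf.aemeasurable) :
    Function.Surjective f := by
  intro y
  obtain ⟨μ, hμ : μ.map hf.aemeasurable = diracProba y⟩ := h (diracProba y)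
  have hfiber : (μ : Measure α) (f ⁻¹' {y}) = 1 := by
    rw [← Measure.map_apply hf (measurableSet_singleton y), ← toMeasure_map μ hf.aemeasurable,
      hμ, diracProba_toMeasure_apply_of_mem (mem_singleton y)]
  obtain ⟨x, hx⟩ := nonempty_of_measure_ne_zero (hfiber ▸ one_ne_zero)
  exact ⟨x, hx⟩

end MeasureTheory.ProbabilityMeasure

lemma surjective_inducedMap_iff {X : Type*} [MetricSpace X] [MeasurableSpace X] [BorelSpace X]
    (f : X → X) (hf : Continuous f) : Function.Surjective (inducedMap f hf) ↔
      Function.Surjective fun μ : ProbabilityMeasure X => μ.map hf.measurable.aemeasurable := by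
  change Function.Surjective (LevyProkhorov.toMeasureEquiv.symm ∘
    (fun μ : ProbabilityMeasure X => μ.map hf.measurable.aemeasurable) ∘
      LevyProkhorov.toMeasureEquiv) ↔ _
  rw [EquivLike.comp_surjective, EquivLike.surjective_comp]

/-- `f` is surjective iff the induced pushforward map `f̂` on `𝓜(X)` is surjective. -/
theorem surjective_iff_induced_surjective
    {X : Type*} [MetricSpace X] [CompactSpace X] [MeasurableSpace X] [BorelSpace X]
    (f : X → X) (hf : Continuous f) :
    Function.Surjective f ↔ Function.Surjective (inducedMap f hf) := by
  rw [surjective_inducedMap_iff]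
  refine ⟨fun hs => ?_, ProbabilityMeasure.surjective_of_surjective_map hf.measurable⟩
  obtain ⟨g, hg, hfg⟩ := hf.exists_measurable_rightInverse_of_surjective hs
  exact ProbabilityMeasure.surjective_map_of_rightInverse hf.measurable hg hfg
end

section
/- Let (X,d) be a compact metric space and f_{0,∞} = {f_n}_{n=0}^∞ a sequence of continuous self-maps of X such that f_n is surjective for every n ≥ 0. Then the induced system (𝓜(X), f̂_{0,∞}) is chain mixing. -/
open MeasureTheory Filter

/-!
Pushing forward along a continuous surjection `f` of a compact metric space is surjective on
probability measures: its range is compact, and it is dense because every `ν` is approximated by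
`f_* (s_* ν)` for a measurable `s` with `f ∘ s` uniformly close to the identity. Hence every
measure has exact backward orbits under `f̂_{0,∞}`. To go from `μ` to `ν` in `k` steps, follow
`c_i = (1 - i/k) f̂^i μ + (i/k) v_i`, where `v` is a backward orbit reaching `ν` at time `k`. As
each `f̂_i` is affine, `f̂_i c_i` and `c_{i+1}` differ only in the weight, by `1/k`, which moves
the Lévy–Prokhorov distance by at most `1/k`.
-/

open MeasureTheory Set Metric Function TopologicalSpace unitInterval

theorem exists_backward_orbit {Y : Type*} {f : ℕ → Y → Y} (hsurj : ∀ n, Surjective (f n))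
    (k : ℕ) (y : Y) : ∃ v : ℕ → Y, v k = y ∧ ∀ i < k, f i (v i) = v (i + 1) := by
  induction k generalizing y with
  | zero => exact ⟨fun _ => y, rfl, fun i hi => absurd hi i.not_lt_zero⟩
  | succ k ih =>
    obtain ⟨z, rfl⟩ := hsurj k y
    obtain ⟨v, hvk, hv⟩ := ih z
    refine ⟨update v (k + 1) (f k z), by simp, fun i hi => ?_⟩
    rw [update_of_ne (by omega : i ≠ k + 1)]
    rcases (Nat.lt_succ_iff.1 hi).lt_or_eq with hik | rfl
    · rw [update_of_ne (by omega : i + 1 ≠ k + 1), hv i hik]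
    · rw [update_self, hvk]

theorem NAChainMixing.of_surjective_of_mix {Y : Type*} [PseudoMetricSpace Y] {f : ℕ → Y → Y}
    (hsurj : ∀ n, Surjective (f n)) (mix : I → Y → Y → Y)
    (map_mix : ∀ n t y z, f n (mix t y z) = mix t (f n y) (f n z))
    (lipschitz_mix : ∀ y z, LipschitzWith 1 (mix · y z))
    (mix_zero : ∀ y z, mix 0 y z = y) (mix_one : ∀ y z, mix 1 y z = z) :
    NAChainMixing f := by
  intro x y ε hε
  obtain ⟨N, hN⟩ := exists_nat_one_div_lt hε
  refine ⟨N + 1, by omega, fun k hNk => ?_⟩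
  have hk : (0 : ℝ) < k := by norm_cast; omega
  obtain ⟨v, hvk, hv⟩ := exists_backward_orbit hsurj k y
  let t : ℕ → I := fun i => projIcc 0 1 zero_le_one (i / k)
  refine ⟨fun i => mix (t i) (nacomp f i x) (v i), ?_, ?_, fun i hi => ?_⟩
  · simp [t, mix_zero, nacomp]
  · simp [t, hk.ne', mix_one, hvk]
  · rw [map_mix, hv i hi]
    calc _ ≤ dist (t i) (t (i + 1)) :=
          ((lipschitz_mix _ _).dist_le_mul _ _).trans_eq (by rw [NNReal.coe_one, one_mul])
      _ ≤ |(i : ℝ) / k - (i + 1 : ℕ) / k| := abs_projIcc_sub_projIcc _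
      _ = 1 / k := by
          rw [abs_sub_comm, Nat.cast_succ, add_div, add_sub_cancel_left, abs_of_pos (by positivity)]
      _ ≤ 1 / (N + 1) := by gcongr; exact_mod_cast hNk
      _ < ε := hN

namespace MeasureTheory

theorem levyProkhorovEDist_map_le_of_dist_le {X Ω : Type*} [MeasurableSpace X]
    [PseudoMetricSpace Ω] [MeasurableSpace Ω] [OpensMeasurableSpace Ω] (ρ : Measure X)
    {φ ψ : X → Ω} (hφ : Measurable φ) (hψ : Measurable ψ) {δ : ℝ}
    (h : ∀ x, dist (φ x) (ψ x) ≤ δ) :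
    levyProkhorovEDist (ρ.map φ) (ρ.map ψ) ≤ ENNReal.ofReal δ := by
  have hside : ∀ {φ ψ : X → Ω}, Measurable φ → Measurable ψ → (∀ x, dist (φ x) (ψ x) ≤ δ) →
      ∀ ε, δ < ε → ∀ s, MeasurableSet s → ρ.map φ s ≤ ρ.map ψ (thickening ε s) := by
    intro φ ψ hφ hψ h ε hε s hs
    rw [Measure.map_apply hφ hs, Measure.map_apply hψ isOpen_thickening.measurableSet]
    exact measure_mono fun x hx =>
      mem_thickening_iff.2 ⟨φ x, hx, by rw [dist_comm]; exact (h x).trans_lt hε⟩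
  refine levyProkhorovEDist_le_of_forall _ _ _ fun ε s hε hε_top hs => ?_
  have hδε : δ < ε.toReal := by
    have := ENNReal.toReal_strict_mono hε_top.ne hε
    rw [ENNReal.toReal_ofReal'] at this
    exact (le_max_left _ _).trans_lt this
  exact ⟨(hside hφ hψ h _ hδε s hs).trans le_self_add,
    (hside hψ hφ (fun x => dist_comm (φ x) (ψ x) ▸ h x) _ hδε s hs).trans le_self_add⟩

namespace ProbabilityMeasure

variable {Ω : Type*} [MeasurableSpace Ω]

noncomputable def mix (p : I) (μ ν : ProbabilityMeasure Ω) : ProbabilityMeasure Ω :=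
  ⟨toNNReal p • μ.toMeasure + toNNReal (σ p) • ν.toMeasure, inferInstance⟩

@[simp] lemma toMeasure_mix (p : I) (μ ν : ProbabilityMeasure Ω) :
    (mix p μ ν).toMeasure = toNNReal p • μ.toMeasure + toNNReal (σ p) • ν.toMeasure := rfl

@[simp] lemma mix_zero (μ ν : ProbabilityMeasure Ω) : mix 0 μ ν = ν := by
  ext1; simp

@[simp] lemma mix_one (μ ν : ProbabilityMeasure Ω) : mix 1 μ ν = μ := by
  ext1; simp

lemma map_mix {Ω' : Type*} [MeasurableSpace Ω'] {f : Ω → Ω'} (hf : Measurable f) (p : I)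
    (μ ν : ProbabilityMeasure Ω) :
    (mix p μ ν).map hf.aemeasurable = mix p (μ.map hf.aemeasurable) (ν.map hf.aemeasurable) := by
  ext1
  simp [Measure.map_add _ _ hf, Measure.map_smul]

lemma measureReal_mix_le (p q : I) (μ ν : ProbabilityMeasure Ω) (s : Set Ω) :
    (mix p μ ν).toMeasure.real s ≤ (mix q μ ν).toMeasure.real s + dist p q := by
  have hμ : μ.toMeasure.real s ≤ 1 := measureReal_le_one
  have hν : ν.toMeasure.real s ≤ 1 := measureReal_le_one
  have hμ0 : 0 ≤ μ.toMeasure.real s := measureReal_nonneg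
  have hν0 : 0 ≤ ν.toMeasure.real s := measureReal_nonneg
  rw [toMeasure_mix, toMeasure_mix, measureReal_add_apply, measureReal_add_apply]
  simp only [measureReal_nnreal_smul_apply, coe_toNNReal, coe_symm_eq, Subtype.dist_eq,
    Real.dist_eq]
  -- the difference of the two sides is `(p - q) * (μ s - ν s)`
  rcases le_total (p : ℝ) q with hpq | hpq
  · rw [abs_of_nonpos (by linarith)]; nlinarith
  · rw [abs_of_nonneg (by linarith)]; nlinarith

lemma levyProkhorovDist_mix_le [PseudoMetricSpace Ω] [OpensMeasurableSpace Ω] (p q : I)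
    (μ ν : ProbabilityMeasure Ω) :
    levyProkhorovDist (mix p μ ν).toMeasure (mix q μ ν).toMeasure ≤ dist p q := by
  refine levyProkhorovDist_le_of_forall_le _ _ dist_nonneg fun ε s hε hs => ?_
  have hε0 : 0 < ε := dist_nonneg.trans_lt hε
  calc (mix p μ ν).toMeasure s = ENNReal.ofReal ((mix p μ ν).toMeasure.real s) :=
        (ofReal_measureReal).symm
    _ ≤ ENNReal.ofReal ((mix q μ ν).toMeasure.real s + ε) := by
        gcongr; linarith [measureReal_mix_le p q μ ν s]
    _ = (mix q μ ν).toMeasure s + ENNReal.ofReal ε := by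
        rw [ENNReal.ofReal_add measureReal_nonneg hε0.le, ofReal_measureReal]
    _ ≤ (mix q μ ν).toMeasure (thickening ε s) + ENNReal.ofReal ε := by
        gcongr; exact self_subset_thickening hε0 s

end ProbabilityMeasure

end MeasureTheory

theorem Function.Surjective.exists_measurable_dist_lt {X Y : Type*} [MeasurableSpace X]
    [PseudoMetricSpace Y] [SeparableSpace Y] [MeasurableSpace Y] [OpensMeasurableSpace Y]
    {f : X → Y} (hf : Surjective f) {δ : ℝ} (hδ : 0 < δ) :
    ∃ s : Y → X, Measurable s ∧ ∀ y, dist (f (s y)) y < δ := by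
  cases isEmpty_or_nonempty Y
  · exact ⟨isEmptyElim, Measurable.of_discrete, isEmptyElim⟩
  obtain ⟨c, hc⟩ := exists_dense_seq Y
  have hcover : ∀ y, ∃ n, dist (c n) y < δ := fun y => by
    simpa [dist_comm] using hc.exists_dist_lt y hδ
  classical
  -- `s` factors through the index of the first point of `c` that is `δ`-close
  refine ⟨fun y => surjInv hf (c (Nat.find (hcover y))), ?_, fun y => ?_⟩
  · exact (measurable_from_nat (f := fun n => surjInv hf (c n))).comp <| measurable_find hcover
      fun n => measurableSet_lt (measurable_const.dist measurable_id) measurable_const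
  · rw [surjInv_eq hf]
    exact Nat.find_spec (hcover y)

namespace MeasureTheory.ProbabilityMeasure

theorem exists_levyProkhorovDist_map_lt {X Y : Type*} [MeasurableSpace X] [PseudoMetricSpace Y]
    [SeparableSpace Y] [MeasurableSpace Y] [OpensMeasurableSpace Y] {f : X → Y}
    (hf : Measurable f) (hsurj : Surjective f) (ν : ProbabilityMeasure Y) {r : ℝ} (hr : 0 < r) :
    ∃ μ : ProbabilityMeasure X,
      levyProkhorovDist ν.toMeasure (μ.map hf.aemeasurable).toMeasure < r := by
  obtain ⟨s, hs, hfs⟩ := hsurj.exists_measurable_dist_lt (half_pos hr)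
  refine ⟨ν.map hs.aemeasurable, ?_⟩
  have hclose : levyProkhorovEDist (ν.toMeasure.map id) (ν.toMeasure.map (f ∘ s)) ≤
      ENNReal.ofReal (r / 2) :=
    levyProkhorovEDist_map_le_of_dist_le _ measurable_id (hf.comp hs) fun y => by
      rw [dist_comm]; exact (hfs y).le
  rw [Measure.map_id, ← Measure.map_map hf hs] at hclose
  exact (ENNReal.toReal_le_of_le_ofReal (half_pos hr).le hclose).trans_lt (half_lt_self hr)

theorem map_surjective {X Y : Type*} [TopologicalSpace X] [CompactSpace X] [T2Space X]
    [MeasurableSpace X] [BorelSpace X] [PseudoMetricSpace Y] [SeparableSpace Y]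
    [MeasurableSpace Y] [BorelSpace Y] {f : X → Y} (hf : Continuous f) (hsurj : Surjective f) :
    Surjective fun μ : ProbabilityMeasure X => μ.map hf.measurable.aemeasurable := by
  let e := LevyProkhorov.probabilityMeasureHomeomorph (Ω := Y)
  have hclosed := (isCompact_range (continuous_map hf)).isClosed
  have hdense : DenseRange (e ∘ fun μ : ProbabilityMeasure X => μ.map hf.measurable.aemeasurable) :=
    Metric.denseRange_iff.2 fun ν r hr =>
      exists_levyProkhorovDist_map_lt hf.measurable hsurj (e.symm ν) hr
  have := (e.symm.surjective.denseRange.comp hdense e.symm.continuous).closure_range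
  rw [← range_eq_univ, ← hclosed.closure_eq]
  simpa [comp_def] using this

end MeasureTheory.ProbabilityMeasure

theorem inducedMap_surjective {X : Type*} [MetricSpace X] [CompactSpace X] [MeasurableSpace X]
    [BorelSpace X] {f : X → X} (hf : Continuous f) (hsurj : Surjective f) :
    Surjective (inducedMap f hf) :=
  LevyProkhorov.toMeasureEquiv.symm.surjective.comp
    ((ProbabilityMeasure.map_surjective hf hsurj).comp LevyProkhorov.toMeasureEquiv.surjective)

/-- If every `f_n` is surjective, then the induced system `(𝓜(X), f̂_{0,∞})` is chain mixing. -/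
theorem induced_chainMixing_of_surjective
    {X : Type*} [MetricSpace X] [CompactSpace X] [MeasurableSpace X] [BorelSpace X]
    (f : ℕ → X → X) (hf : ∀ n, Continuous (f n)) (hsurj : ∀ n, Function.Surjective (f n)) :
    NAChainMixing (fun n => inducedMap (f n) (hf n)) := by
  -- `ProbabilityMeasure.mix p μ ν` puts the weight `p` on `μ`, hence the swap
  refine NAChainMixing.of_surjective_of_mix (fun n => inducedMap_surjective (hf n) (hsurj n))
    (fun t μ ν => .ofMeasure (ProbabilityMeasure.mix t ν.toMeasure μ.toMeasure))
    (fun n t μ ν => ?_) (fun μ ν => ?_) (by simp) (by simp)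
  · exact congrArg LevyProkhorov.ofMeasure (ProbabilityMeasure.map_mix (hf n).measurable _ _ _)
  · refine LipschitzWith.of_dist_le_mul fun p q => ?_
    rw [NNReal.coe_one, one_mul]
    exact ProbabilityMeasure.levyProkhorovDist_mix_le p q _ _
end

section
/- Let X = {a, b} be a two-point set with the discrete metric (d(x,y) = 1 for x ≠ y, d(x,x) = 0), and let f : X → X be the swap map f(a) = b, f(b) = a. Then (X, f) has the shadowing property, but the induced system (𝓜(X), f̂) on the space of Borel probability measures with the Lévy–Prokhorov metric does not have the shadowing property. -/
open MeasureTheory Filter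

/-- The shadowing property of the autonomous system `(Y, g)`. -/
def ShadowingMap {Y : Type*} [PseudoMetricSpace Y] (g : Y → Y) : Prop :=
  ∀ ε : ℝ, 0 < ε → ∃ δ : ℝ, 0 < δ ∧ ∀ x : ℕ → Y,
    (∀ n, dist (g (x n)) (x (n + 1)) < δ) →
    ∃ z : Y, ∀ n, dist (g^[n] z) (x n) < ε

/-!
A `δ`-pseudo-orbit with `δ ≤ 1` in a space whose distinct points are at distance `≥ 1` is a true
orbit, so the swap has shadowing. On `𝓜({a, b})` the mass of `a` is an isometry onto `[0, 1]`
(for `ε ≤ 1` the `ε`-thickening of `{a}` is `{a}`) conjugating `f̂` to `σ t = 1 - t`. For an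
isometry `σ` and any chain `y` with small steps, `n ↦ σ^[n] (y n)` is a pseudo-orbit, and a point
shadowing it stays close to every `y n`; the chain descending from `1` to `0` in steps `δ / 2`
admits no such point.
-/

open MeasureTheory Metric Set Function unitInterval

section Shadowing

variable {Y Z : Type*} [PseudoMetricSpace Y] [PseudoMetricSpace Z]

theorem Isometry.iterate {g : Y → Y} (hg : Isometry g) : ∀ n, Isometry g^[n]
  | 0 => isometry_id
  | n + 1 => (hg.iterate n).comp hg

theorem ShadowingMap.of_pairwise_le_dist {r : ℝ} (hr : 0 < r)
    (h : Pairwise fun x y : Y => r ≤ dist x y) (g : Y → Y) : ShadowingMap g := by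
  intro ε hε
  refine ⟨r, hr, fun x hx => ⟨x 0, fun n => ?_⟩⟩
  have horbit : ∀ n, g^[n] (x 0) = x n := by
    intro n
    induction n with
    | zero => rfl
    | succ n ih =>
      rw [iterate_succ_apply', ih]
      by_contra hne
      exact (hx n).not_ge (h hne)
  simpa [horbit n] using hε

theorem ShadowingMap.of_semiconj_isometry {g : Y → Y} {g' : Z → Z} {φ : Y → Z}
    (hφ : Isometry φ) (hsurj : Surjective φ) (hconj : Semiconj φ g g')
    (hg : ShadowingMap g) : ShadowingMap g' := by
  intro ε hε
  obtain ⟨δ, hδ, hshadow⟩ := hg ε hε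
  refine ⟨δ, hδ, fun x hx => ?_⟩
  have hlift : ∀ n, φ (surjInv hsurj (x n)) = x n := fun n => surjInv_eq hsurj (x n)
  obtain ⟨z, hz⟩ := hshadow (fun n => surjInv hsurj (x n)) fun n => by
    rw [← hφ.dist_eq, hconj, hlift, hlift]
    exact hx n
  refine ⟨φ z, fun n => ?_⟩
  rw [← hconj.iterate_right n z, ← hlift n, hφ.dist_eq]
  exact hz n

theorem ShadowingMap.dist_lt_of_isometry {g : Y → Y} (hg : Isometry g) (hs : ShadowingMap g)
    {ε : ℝ} (hε : 0 < ε) :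
    ∃ δ > 0, ∀ y : ℕ → Y, (∀ n, dist (y n) (y (n + 1)) < δ) →
      ∀ m n, dist (y m) (y n) < 2 * ε := by
  obtain ⟨δ, hδ, hshadow⟩ := hs ε hε
  refine ⟨δ, hδ, fun y hy m n => ?_⟩
  obtain ⟨z, hz⟩ := hshadow (fun n => g^[n] (y n)) fun n => by
    rw [← iterate_succ_apply' g n, (hg.iterate (n + 1)).dist_eq]
    exact hy n
  have hpinned : ∀ n, dist z (y n) < ε := fun n => (hg.iterate n).dist_eq z (y n) ▸ hz n
  calc dist (y m) (y n) ≤ dist z (y m) + dist z (y n) := dist_triangle_left _ _ _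
    _ < 2 * ε := by linarith [hpinned m, hpinned n]

end Shadowing

namespace unitInterval

theorem isometry_symm : Isometry σ :=
  Isometry.of_dist_eq fun s t => by
    rw [Subtype.dist_eq, Subtype.dist_eq, coe_symm_eq, coe_symm_eq, Real.dist_eq, Real.dist_eq,
      sub_sub_sub_cancel_left, abs_sub_comm]

theorem not_shadowingMap_symm : ¬ ShadowingMap σ := by
  intro hs
  obtain ⟨δ, hδ, hpinned⟩ := hs.dist_lt_of_isometry isometry_symm one_half_pos
  obtain ⟨K, hK⟩ := exists_nat_gt (2 / δ)
  let y : ℕ → I := fun n => projIcc 0 1 zero_le_one (1 - n * (δ / 2))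
  have hstep : ∀ n, dist (y n) (y (n + 1)) < δ := fun n => calc
    dist (y n) (y (n + 1)) ≤ dist (1 - n * (δ / 2)) (1 - (n + 1 : ℕ) * (δ / 2)) := by
        simpa only [NNReal.coe_one, one_mul] using
          (LipschitzWith.projIcc zero_le_one).dist_le_mul _ _
    _ = δ / 2 := by
        rw [Real.dist_eq, abs_of_nonneg (by push_cast; linarith)]
        push_cast; ring
    _ < δ := half_lt_self hδ
  have hy0 : y 0 = 1 := by simp [y]
  have hyK : y K = 0 := projIcc_of_le_left _ (by
    rw [div_lt_iff₀ hδ] at hK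
    linarith)
  have := hpinned y hstep 0 K
  rw [hy0, hyK] at this
  norm_num [Subtype.dist_eq] at this

end unitInterval

section TwoPoint

variable {X : Type*} [MeasurableSpace X] [MeasurableSingletonClass X] {a b : X}

theorem measureReal_singleton_eq_one_sub (hcompl : ({a}ᶜ : Set X) = {b}) (μ : Measure X)
    [IsProbabilityMeasure μ] : μ.real {b} = 1 - μ.real {a} := by
  rw [← hcompl, probReal_compl_eq_one_sub (measurableSet_singleton a)]

theorem measureReal_le_add_abs_sub_singleton (hcompl : ({a}ᶜ : Set X) = {b})
    (μ ν : Measure X) [IsProbabilityMeasure μ] [IsProbabilityMeasure ν] (B : Set X) :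
    μ.real B ≤ ν.real B + |μ.real {a} - ν.real {a}| := by
  have hpair : B ⊆ {a, b} := by
    rw [insert_eq, ← hcompl, union_compl_self]
    exact subset_univ B
  have hΔ := abs_le.mp (le_refl |μ.real {a} - ν.real {a}|)
  rcases subset_pair_iff_eq.mp hpair with rfl | rfl | rfl | rfl
  · simp
  · linarith
  · rw [measureReal_singleton_eq_one_sub hcompl μ, measureReal_singleton_eq_one_sub hcompl ν]
    linarith
  · rw [insert_eq, ← hcompl, union_compl_self, probReal_univ, probReal_univ]
    linarith

noncomputable def massAt (a : X) (μ : LevyProkhorov (ProbabilityMeasure X)) : I :=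
  ⟨μ.toMeasure.toMeasure.real {a}, measureReal_nonneg, measureReal_le_one⟩

theorem surjective_massAt (hab : a ≠ b) : Surjective (massAt (X := X) a) := by
  intro t
  let μ : Measure X :=
    ENNReal.ofReal t • Measure.dirac a + ENNReal.ofReal (1 - t) • Measure.dirac b
  have hμa : μ {a} = ENNReal.ofReal t := by simp [μ, hab.symm]
  have : IsProbabilityMeasure μ :=
    ⟨by simp [μ, ← ENNReal.ofReal_add t.2.1 (sub_nonneg.2 t.2.2)]⟩
  exact ⟨.ofMeasure ⟨μ, this⟩, Subtype.ext (by simp [massAt, measureReal_def, hμa, t.2.1])⟩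

end TwoPoint

section LevyProkhorov

variable {X : Type*} [PseudoMetricSpace X] [MeasurableSpace X] [MeasurableSingletonClass X]
  {a b : X}

theorem abs_sub_le_levyProkhorovDist (hcompl : ({a}ᶜ : Set X) = {b}) (hab : 1 ≤ dist a b)
    (μ ν : Measure X) [IsProbabilityMeasure μ] [IsProbabilityMeasure ν] :
    |μ.real {a} - ν.real {a}| ≤ levyProkhorovDist μ ν := by
  refine le_of_forall_gt_imp_ge_of_dense fun ε hε => ?_
  have hε0 : 0 ≤ ε := ENNReal.toReal_nonneg.trans hε.le
  rcases le_or_gt ε 1 with hε1 | hε1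
  · have hthick : thickening ε {a} ⊆ {a} := by
      rw [thickening_singleton]
      intro x hx
      by_contra hxa
      have hxb : x = b := by rw [← mem_singleton_iff, ← hcompl]; exact hxa
      rw [hxb, mem_ball, dist_comm] at hx
      linarith
    have hlt : levyProkhorovEDist μ ν < ENNReal.ofReal ε :=
      (ENNReal.lt_ofReal_iff_toReal_lt (levyProkhorovEDist_ne_top μ ν)).mpr hε
    have hμν := left_measure_le_of_levyProkhorovEDist_lt hlt (measurableSet_singleton a)
    have hνμ := right_measure_le_of_levyProkhorovEDist_lt hlt (measurableSet_singleton a)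
    rw [ENNReal.toReal_ofReal hε0] at hμν hνμ
    replace hμν := hμν.trans (add_le_add_left (measure_mono hthick) _)
    replace hνμ := hνμ.trans (add_le_add_left (measure_mono hthick) _)
    rw [← ofReal_measureReal (μ := μ) (s := {a}), ← ofReal_measureReal (μ := ν) (s := {a}),
      ← ENNReal.ofReal_add measureReal_nonneg hε0,
      ENNReal.ofReal_le_ofReal_iff (by positivity)] at hμν hνμ
    rw [abs_sub_le_iff]
    constructor <;> linarith
  · exact (abs_sub_le_of_nonneg_of_le measureReal_nonneg measureReal_le_one measureReal_nonneg
      measureReal_le_one).trans hε1.le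

variable [OpensMeasurableSpace X]

theorem levyProkhorovDist_le_abs_sub (hcompl : ({a}ᶜ : Set X) = {b})
    (μ ν : Measure X) [IsProbabilityMeasure μ] [IsProbabilityMeasure ν] :
    levyProkhorovDist μ ν ≤ |μ.real {a} - ν.real {a}| := by
  refine levyProkhorovDist_le_of_forall_le μ ν (abs_nonneg _) fun ε B hε _ => ?_
  have hε0 : 0 < ε := (abs_nonneg _).trans_lt hε
  calc μ B = ENNReal.ofReal (μ.real B) := (ofReal_measureReal).symm
    _ ≤ ENNReal.ofReal (ν.real B + ε) := ENNReal.ofReal_le_ofReal <| by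
        linarith [measureReal_le_add_abs_sub_singleton hcompl μ ν B]
    _ = ν B + ENNReal.ofReal ε := by
        rw [ENNReal.ofReal_add measureReal_nonneg hε0.le, ofReal_measureReal]
    _ ≤ ν (thickening ε B) + ENNReal.ofReal ε := by
        gcongr
        exact self_subset_thickening hε0 B

theorem isometry_massAt (hcompl : ({a}ᶜ : Set X) = {b}) (hab : 1 ≤ dist a b) :
    Isometry (massAt (X := X) a) :=
  Isometry.of_dist_eq fun μ ν => by
    rw [Subtype.dist_eq, Real.dist_eq, LevyProkhorov.dist_probabilityMeasure_def]
    exact le_antisymm (abs_sub_le_levyProkhorovDist hcompl hab _ _)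
      (levyProkhorovDist_le_abs_sub hcompl _ _)

end LevyProkhorov

theorem semiconj_massAt_inducedMap {X : Type*} [MetricSpace X] [MeasurableSpace X]
    [BorelSpace X] {a b : X} (hcompl : ({a}ᶜ : Set X) = {b}) {f : X → X} (hf : Continuous f)
    (hpre : f ⁻¹' {a} = {b}) : Semiconj (massAt a) (inducedMap f hf) σ := fun μ =>
  Subtype.ext <| by
    change (μ.toMeasure.map hf.measurable.aemeasurable).toMeasure.real {a} = 1 - _
    rw [ProbabilityMeasure.toMeasure_map,
      map_measureReal_apply hf.measurable (measurableSet_singleton a), hpre,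
      measureReal_singleton_eq_one_sub hcompl]
    rfl

/-- For the two-point space `X = {a, b}` with the discrete metric and the swap map `f`,
`(X, f)` has the shadowing property but the induced system `(𝓜(X), f̂)` does not. -/
theorem swap_shadowing_induced_not_shadowing
    {X : Type*} [MetricSpace X] [MeasurableSpace X] [BorelSpace X]
    (a b : X) (hab : a ≠ b) (hdist : dist a b = 1) (hX : ∀ x : X, x = a ∨ x = b)
    (f : X → X) (hfa : f a = b) (hfb : f b = a) (hf : Continuous f) :
    ShadowingMap f ∧ ¬ ShadowingMap (inducedMap f hf) := by
  have hcompl : ({a}ᶜ : Set X) = {b} := by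
    ext x
    rcases hX x with rfl | rfl <;> simp [hab, hab.symm]
  have hpre : f ⁻¹' {a} = {b} := by
    ext x
    rcases hX x with rfl | rfl <;> simp [hfa, hfb, hab, hab.symm]
  have hdiscrete : Pairwise fun x y : X => 1 ≤ dist x y := by
    intro x y hxy
    rcases hX x with rfl | rfl <;> rcases hX y with rfl | rfl <;>
      simp_all [dist_comm]
  refine ⟨.of_pairwise_le_dist one_pos hdiscrete f, fun hshadow => not_shadowingMap_symm ?_⟩
  exact hshadow.of_semiconj_isometry (isometry_massAt hcompl hdist.ge) (surjective_massAt hab)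
    (semiconj_massAt_inducedMap hcompl hf hpre)
end

section
/- Let (X,d) be a compact metric space and f_{0,∞} = {f_n}_{n=0}^∞ a sequence of continuous self-maps of X. If (X, f_{0,∞}) is Li-Yorke chaotic, then so is the induced system (𝓜(X), f̂_{0,∞}); likewise, if (X, f_{0,∞}) is distributionally chaotic, then so is (𝓜(X), f̂_{0,∞}). -/
open MeasureTheory Filter

/-- Li–Yorke chaos of the non-autonomous system given by the maps `f n`: there is an
uncountable scrambled set. -/
def NALiYorkeChaotic {Y : Type*} [PseudoMetricSpace Y] (f : ℕ → Y → Y) : Prop :=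
  ∃ S : Set Y, ¬ S.Countable ∧ ∀ x ∈ S, ∀ y ∈ S, x ≠ y →
    Filter.atTop.liminf (fun n : ℕ => dist (nacomp f n x) (nacomp f n y)) = 0 ∧
    0 < Filter.atTop.limsup (fun n : ℕ => dist (nacomp f n x) (nacomp f n y))

/-- Distributional chaos of the non-autonomous system given by the maps `f n`: there is an
uncountable distributionally scrambled set. -/
def NADistributionallyChaotic {Y : Type*} [PseudoMetricSpace Y] (f : ℕ → Y → Y) : Prop :=
  ∃ D : Set Y, ¬ D.Countable ∧ ∀ x ∈ D, ∀ y ∈ D, x ≠ y →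
    (∀ ε : ℝ, 0 < ε → Filter.atTop.limsup (fun n : ℕ =>
      (({i : ℕ | 1 ≤ i ∧ i ≤ n ∧ dist (nacomp f i x) (nacomp f i y) < ε}).ncard : ℝ) / n) = 1) ∧
    (∃ δ : ℝ, 0 < δ ∧ Filter.atTop.liminf (fun n : ℕ =>
      (({i : ℕ | 1 ≤ i ∧ i ≤ n ∧ dist (nacomp f i x) (nacomp f i y) < δ}).ncard : ℝ) / n) = 0)

/-!
The Dirac embedding `x ↦ δₓ` of `X` into `𝓜(X)` conjugates `f_{0,∞}` to `f̂_{0,∞}` on its image,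
and the Lévy–Prokhorov distance of two Dirac masses is squeezed between `min (d x y) 1` and
`d x y`. Hence distances along orbits are small (resp. not small) simultaneously in `X` and in
`𝓜(X)`, and the injective image of a (distributionally) scrambled set is again one.
-/

open Metric Set Function

section RealSequences

variable {ι : Type*} {l : Filter ι} [l.NeBot] {u v : ι → ℝ}

theorem liminf_eq_of_liminf_eq_of_le {a C : ℝ} (ha : ∀ n, a ≤ u n) (huv : ∀ n, u n ≤ v n)
    (hvC : ∀ n, v n ≤ C) (hv : l.liminf v = a) : l.liminf u = a := by
  have huC : ∀ n, u n ≤ C := fun n => (huv n).trans (hvC n)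
  refine le_antisymm ?_ ?_
  · exact hv ▸ liminf_le_liminf (.of_forall huv) (isBoundedUnder_of ⟨a, ha⟩)
      (isCoboundedUnder_ge_of_le l hvC)
  · exact le_liminf_of_le (isCoboundedUnder_ge_of_le l huC) (.of_forall ha)

theorem limsup_eq_of_limsup_eq_of_le {a C : ℝ} (hC : ∀ n, C ≤ v n) (hvu : ∀ n, v n ≤ u n)
    (ha : ∀ n, u n ≤ a) (hv : l.limsup v = a) : l.limsup u = a := by
  have hCu : ∀ n, C ≤ u n := fun n => (hC n).trans (hvu n)
  refine le_antisymm ?_ ?_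
  · exact limsup_le_of_le (isCoboundedUnder_le_of_le l hCu) (.of_forall ha)
  · exact hv ▸ limsup_le_limsup (.of_forall hvu) (isCoboundedUnder_le_of_le l hC)
      (isBoundedUnder_of ⟨a, ha⟩)

theorem limsup_pos_of_min_le {C : ℝ} (hv : ∀ n, 0 ≤ v n) (hvu : ∀ n, min (v n) 1 ≤ u n)
    (huC : ∀ n, u n ≤ C) (hpos : 0 < l.limsup v) : 0 < l.limsup u := by
  obtain ⟨c, hc, hcv⟩ := exists_between hpos
  have hfreq : ∃ᶠ n in l, c < v n :=
    frequently_lt_of_lt_limsup (isCoboundedUnder_le_of_le l hv) hcv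
  have hle : min c 1 ≤ l.limsup u :=
    le_limsup_of_frequently_le (hfreq.mono fun n hn => (min_le_min_right 1 hn.le).trans (hvu n))
      (isBoundedUnder_of ⟨C, huC⟩)
  exact (lt_min hc one_pos).trans_le hle

end RealSequences

section CountingRatio

theorem ncard_div_le_one (P : ℕ → Prop) (n : ℕ) :
    ({i : ℕ | 1 ≤ i ∧ i ≤ n ∧ P i}.ncard : ℝ) / n ≤ 1 := by
  have hle : {i : ℕ | 1 ≤ i ∧ i ≤ n ∧ P i}.ncard ≤ n := by
    simpa using ncard_le_ncard (t := Icc 1 n) (fun i hi => mem_Icc.2 ⟨hi.1, hi.2.1⟩)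
      (finite_Icc 1 n)
  exact div_le_one_of_le₀ (by exact_mod_cast hle) n.cast_nonneg

theorem ncard_div_mono {P Q : ℕ → Prop} (h : ∀ i, P i → Q i) (n : ℕ) :
    ({i : ℕ | 1 ≤ i ∧ i ≤ n ∧ P i}.ncard : ℝ) / n ≤
      ({i : ℕ | 1 ≤ i ∧ i ≤ n ∧ Q i}.ncard : ℝ) / n := by
  gcongr
  · exact (finite_Icc 1 n).subset fun i hi => ⟨hi.1, hi.2.1⟩
  · exact h _

end CountingRatio

section Transfer

theorem exists_not_countable_of_injective {α β : Type*} {φ : α → β} (hφ : Injective φ)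
    {R : β → β → Prop} {S : Set α} (hS : ¬ S.Countable)
    (hR : ∀ x ∈ S, ∀ y ∈ S, x ≠ y → R (φ x) (φ y)) :
    ∃ T : Set β, ¬ T.Countable ∧ ∀ a ∈ T, ∀ b ∈ T, a ≠ b → R a b := by
  refine ⟨φ '' S, fun hc => hS ((hc.preimage hφ).mono (subset_preimage_image φ S)), ?_⟩
  rintro _ ⟨x, hx, rfl⟩ _ ⟨y, hy, rfl⟩ hxy
  exact hR x hx y hy (ne_of_apply_ne φ hxy)

variable {X Y : Type*} [MetricSpace X] [PseudoMetricSpace Y] {f : ℕ → X → X} {g : ℕ → Y → Y}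
  {φ : X → Y}

theorem injective_of_min_dist_one_le (hge : ∀ x y, min (dist x y) 1 ≤ dist (φ x) (φ y)) :
    Injective φ := by
  intro x y hxy
  have h := hge x y
  rw [hxy, dist_self, min_le_iff] at h
  exact dist_le_zero.1 (h.resolve_right (by norm_num))

theorem dist_lt_of_min_dist_one_le {x y : X} {δ : ℝ}
    (hge : min (dist x y) 1 ≤ dist (φ x) (φ y)) (hlt : dist (φ x) (φ y) < min δ 1) :
    dist x y < δ :=
  ((min_lt_iff.1 (hge.trans_lt hlt)).resolve_right (min_le_right δ 1).not_gt).trans_le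
    (min_le_left δ 1)

theorem NALiYorkeChaotic.of_semiconj [BoundedSpace X]
    (hsemiconj : ∀ n x, nacomp g n (φ x) = φ (nacomp f n x))
    (hle : ∀ x y, dist (φ x) (φ y) ≤ dist x y)
    (hge : ∀ x y, min (dist x y) 1 ≤ dist (φ x) (φ y)) (h : NALiYorkeChaotic f) :
    NALiYorkeChaotic g := by
  obtain ⟨S, hS, hpair⟩ := h
  refine exists_not_countable_of_injective (injective_of_min_dist_one_le hge) hS
    fun x hx y hy hxy => ?_
  obtain ⟨hliminf, hlimsup⟩ := hpair x hx y hy hxy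
  have hC : ∀ n, dist (nacomp f n x) (nacomp f n y) ≤ diam (univ : Set X) := fun n =>
    dist_le_diam_of_mem (Bornology.isBounded_univ.2 ‹_›) (mem_univ _) (mem_univ _)
  simp only [hsemiconj]
  exact ⟨liminf_eq_of_liminf_eq_of_le (fun _ => dist_nonneg) (fun _ => hle _ _) hC hliminf,
    limsup_pos_of_min_le (fun _ => dist_nonneg) (fun _ => hge _ _)
      (fun n => (hle _ _).trans (hC n)) hlimsup⟩

theorem NADistributionallyChaotic.of_semiconj
    (hsemiconj : ∀ n x, nacomp g n (φ x) = φ (nacomp f n x))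
    (hle : ∀ x y, dist (φ x) (φ y) ≤ dist x y)
    (hge : ∀ x y, min (dist x y) 1 ≤ dist (φ x) (φ y)) (h : NADistributionallyChaotic f) :
    NADistributionallyChaotic g := by
  obtain ⟨D, hD, hpair⟩ := h
  refine exists_not_countable_of_injective (injective_of_min_dist_one_le hge) hD
    fun x hx y hy hxy => ?_
  obtain ⟨hclose, δ, hδ, hapart⟩ := hpair x hx y hy hxy
  simp only [hsemiconj]
  refine ⟨fun ε hε => limsup_eq_of_limsup_eq_of_le (fun _ => by positivity)
    (ncard_div_mono fun i hi => (hle _ _).trans_lt hi) (ncard_div_le_one _) (hclose ε hε), ?_⟩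
  -- Below distance `1`, `φ` does not shrink distances; hence the threshold `min δ 1`.
  exact ⟨min δ 1, lt_min hδ one_pos, liminf_eq_of_liminf_eq_of_le (fun _ => by positivity)
    (ncard_div_mono fun i hi => dist_lt_of_min_dist_one_le (hge _ _) hi) (ncard_div_le_one _)
    hapart⟩

end Transfer

section Dirac

variable {X : Type*} [MetricSpace X] [MeasurableSpace X] [BorelSpace X]

noncomputable def diracLP (x : X) : LevyProkhorov (ProbabilityMeasure X) :=
  LevyProkhorov.ofMeasure ⟨Measure.dirac x, inferInstance⟩

theorem dist_diracLP_le (x y : X) : dist (diracLP x) (diracLP y) ≤ dist x y := by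
  change levyProkhorovDist (Measure.dirac x) (Measure.dirac y) ≤ _
  refine levyProkhorovDist_le_of_forall_le _ _ dist_nonneg fun ε B hε hB => ?_
  by_cases hx : x ∈ B
  · have hy : y ∈ thickening ε B := mem_thickening_iff.2 ⟨x, hx, by rwa [dist_comm]⟩
    rw [Measure.dirac_apply_of_mem hy]
    exact prob_le_one.trans le_self_add
  · rw [Measure.dirac_apply' x hB, indicator_of_notMem hx]
    exact zero_le

theorem min_dist_one_le_dist_diracLP (x y : X) :
    min (dist x y) 1 ≤ dist (diracLP x) (diracLP y) := by
  by_contra! hlt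
  obtain ⟨c, hLc, hcd⟩ := exists_between hlt
  obtain ⟨hcxy, hc1⟩ := lt_min_iff.1 hcd
  have hE : levyProkhorovEDist (Measure.dirac x) (Measure.dirac y) < ENNReal.ofReal c :=
    edist_lt_ofReal.2 hLc
  have hy : y ∉ thickening (ENNReal.ofReal c).toReal {x} := by
    rw [ENNReal.toReal_ofReal (dist_nonneg.trans hLc.le), thickening_singleton, mem_ball,
      not_lt, dist_comm]
    exact hcxy.le
  have hmass := left_measure_le_of_levyProkhorovEDist_lt hE (measurableSet_singleton x)
  rw [Measure.dirac_apply_of_mem (mem_singleton x),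
    Measure.dirac_apply' y isOpen_thickening.measurableSet, indicator_of_notMem hy,
    zero_add] at hmass
  exact (ENNReal.ofReal_lt_one.2 hc1).not_ge hmass

theorem inducedMap_diracLP (g : X → X) (hg : Continuous g) (x : X) :
    inducedMap g hg (diracLP x) = diracLP (g x) :=
  congrArg LevyProkhorov.ofMeasure (Subtype.ext (Measure.map_dirac' hg.measurable x))

theorem nacomp_inducedMap_diracLP (f : ℕ → X → X) (hf : ∀ n, Continuous (f n)) (n : ℕ)
    (x : X) :
    nacomp (fun n => inducedMap (f n) (hf n)) n (diracLP x) = diracLP (nacomp f n x) := by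
  induction n with
  | zero => rfl
  | succ n ih => exact (congrArg _ ih).trans (inducedMap_diracLP (f n) (hf n) _)

end Dirac

/-- Li–Yorke chaos (resp. distributional chaos) of `(X, f_{0,∞})` carries over to the induced
system `(𝓜(X), f̂_{0,∞})`. -/
theorem induced_chaos_of_chaos
    {X : Type*} [MetricSpace X] [CompactSpace X] [MeasurableSpace X] [BorelSpace X]
    (f : ℕ → X → X) (hf : ∀ n, Continuous (f n)) :
    (NALiYorkeChaotic f → NALiYorkeChaotic (fun n => inducedMap (f n) (hf n))) ∧
    (NADistributionallyChaotic f →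
      NADistributionallyChaotic (fun n => inducedMap (f n) (hf n))) :=
  ⟨.of_semiconj (nacomp_inducedMap_diracLP f hf) dist_diracLP_le min_dist_one_le_dist_diracLP,
    .of_semiconj (nacomp_inducedMap_diracLP f hf) dist_diracLP_le min_dist_one_le_dist_diracLP⟩
end
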